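/- arXiv:0711.3794 — 5 statements merged into one kernel-verified Lean document; each statement's English description precedes it below -/
import Mathlib

section
/- In the polynomial ring F_p[x], for every i with 0 ≤ i ≤ p-1, one has Σ_{j=0}^{p-i-1} C(i+j, i) x^j = (1-x)^{p-i-1}. -/
open Polynomial

lemma key_choose (p : ℕ) (hp : p.Prime) (i j : ℕ) (h : i + j ≤ p - 1) :
    (((i + j).choose i : ℕ) : ZMod p) = (-1) ^ j * ((p - 1 - i).choose j : ℕ) := by
  haveI : Fact p.Prime := ⟨hp⟩
  induction j with
  | zero => simp
  | succ j ih =>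
    have h' : i + j ≤ p - 1 := by omega
    have hj1 : j + 1 ≤ p - 1 - i := by omega
    have hp2 : 2 ≤ p := hp.two_le
    have hne : ((j + 1 : ℕ) : ZMod p) ≠ 0 := by
      rw [Ne, ZMod.natCast_eq_zero_iff]
      intro hd
      have := Nat.le_of_dvd (by omega) hd
      omega
    apply mul_right_cancel₀ hne
    have e1 : (i + j + 1) * (i + j).choose j = (i + j + 1).choose (j + 1) * (j + 1) :=
      Nat.add_one_mul_choose_eq (i + j) j
    have e2 : (p - 1 - i).choose (j + 1) * (j + 1) = (p - 1 - i).choose j * (p - 1 - i - j) :=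
      Nat.choose_succ_right_eq (p - 1 - i) j
    have e3 : ((i + j + 1 : ℕ) : ZMod p) = -(((p - 1 - i - j : ℕ)) : ZMod p) := by
      have hpq : (i + j + 1) + (p - 1 - i - j) = p := by omega
      have : ((i + j + 1 : ℕ) : ZMod p) + ((p - 1 - i - j : ℕ) : ZMod p) = 0 := by
        rw [← Nat.cast_add, hpq, ZMod.natCast_self]
      linear_combination this
    have esymm : (i + j).choose i = (i + j).choose j := by
      have h0 := Nat.choose_symm (Nat.le_add_right i j)
      rw [Nat.add_sub_cancel_left] at h0
      exact h0.symm
    have esymm2 : (i + (j + 1)).choose i = (i + j + 1).choose (j + 1) := by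
      have h0 := Nat.choose_symm (Nat.le_add_right i (j + 1))
      rw [Nat.add_sub_cancel_left] at h0
      rw [← h0]
      congr 1
    rw [esymm2]
    calc (((i + j + 1).choose (j + 1) : ℕ) : ZMod p) * ((j + 1 : ℕ) : ZMod p)
        = (((i + j + 1).choose (j + 1) * (j + 1) : ℕ) : ZMod p) := by norm_cast
      _ = (((i + j + 1) * (i + j).choose j : ℕ) : ZMod p) := by rw [← e1]
      _ = ((i + j + 1 : ℕ) : ZMod p) * (((i + j).choose i : ℕ) : ZMod p) := by
          rw [esymm]; push_cast; ring
      _ = -(((p - 1 - i - j : ℕ)) : ZMod p) * ((-1) ^ j * ((p - 1 - i).choose j : ℕ)) := by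
          rw [e3, ih h']
      _ = (-1) ^ (j + 1) * (((p - 1 - i).choose j * (p - 1 - i - j) : ℕ) : ZMod p) := by
          push_cast; ring
      _ = (-1) ^ (j + 1) * ((p - 1 - i).choose (j + 1) : ℕ) * ((j + 1 : ℕ) : ZMod p) := by
          rw [← e2]; push_cast; ring

theorem stmt_2 (p : ℕ) (hp : p.Prime) (i : ℕ) (hi : i ≤ p - 1) :
    (∑ j ∈ Finset.range (p - i), (Nat.choose (i + j) i : ZMod p) • (X : (ZMod p)[X]) ^ j)
      = (1 - X) ^ (p - i - 1) := by
  have hp2 : 2 ≤ p := hp.two_le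
  set n := p - 1 - i with hn
  have h1 : p - i = n + 1 := by omega
  have h2 : p - i - 1 = n := by omega
  rw [h1]
  simp only [Nat.add_sub_cancel]
  have expand : ((1 : (ZMod p)[X]) - X) ^ n
      = ∑ j ∈ Finset.range (n + 1), ((-1) ^ j * (n.choose j : ZMod p)) • (X : (ZMod p)[X]) ^ j := by
    rw [sub_eq_add_neg, add_comm, add_pow]
    apply Finset.sum_congr rfl
    intro j hj
    rw [smul_eq_C_mul, map_mul, map_pow, map_neg, map_one, neg_pow, C_eq_natCast]
    ring
  rw [expand]
  apply Finset.sum_congr rfl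
  intro j hj
  rw [Finset.mem_range] at hj
  congr 1
  rw [key_choose p hp i j (by omega)]
end

section
/- For a prime p, an integer e ≥ 1, and an integer a with 1 ≤ a ≤ p-1, the multinomial quotient (a p^e)! / (p^e!)^a is congruent to a! modulo p. -/
open Finset Nat

lemma lucas_step (p : ℕ) [Fact p.Prime] (j e : ℕ) :
    Nat.choose (j * p ^ e) (p ^ e) ≡ j [MOD p] := by
  induction e with
  | zero => simpa using Nat.ModEq.refl j
  | succ e ih =>
    have h := Choose.choose_modEq_choose_mod_mul_choose_div_nat
      (p := p) (n := j * p ^ (e + 1)) (k := p ^ (e + 1))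
    have hp0 : 0 < p := (Fact.out : p.Prime).pos
    have h1 : j * p ^ (e + 1) % p = 0 := by
      simp [Nat.mul_mod, Nat.pow_mod, Nat.mod_self]
    have h2 : p ^ (e + 1) % p = 0 := by
      simp [Nat.pow_mod]
    have h3 : j * p ^ (e + 1) / p = j * p ^ e := by
      rw [pow_succ, ← mul_assoc, Nat.mul_div_cancel _ hp0]
    have h4 : p ^ (e + 1) / p = p ^ e := by
      rw [pow_succ, Nat.mul_div_cancel _ hp0]
    rw [h1, h2, h3, h4] at h
    simp only [Nat.choose_self, one_mul] at h
    exact h.trans ih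

lemma factorial_mul_eq (n a : ℕ) :
    (a * n).factorial =
      (∏ j ∈ range a, Nat.choose ((j + 1) * n) n) * (n.factorial) ^ a := by
  induction a with
  | zero => simp
  | succ a ih =>
    have key : ((a + 1) * n).factorial =
        Nat.choose ((a + 1) * n) n * n.factorial * (a * n).factorial := by
      have h := Nat.choose_mul_factorial_mul_factorial
        (n := (a + 1) * n) (k := n) (by nlinarith)
      have : (a + 1) * n - n = a * n := by ring_nf; omega
      rw [this] at h
      omega
    rw [key, ih, prod_range_succ, pow_succ]
    ring

theorem stmt_3 (p : ℕ) (hp : p.Prime) (e : ℕ) (he : 1 ≤ e) (a : ℕ)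
    (ha1 : 1 ≤ a) (ha2 : a ≤ p - 1) :
    (a * p ^ e).factorial / ((p ^ e).factorial ^ a) ≡ a.factorial [MOD p] := by
  haveI : Fact p.Prime := ⟨hp⟩
  have hq : (a * p ^ e).factorial / ((p ^ e).factorial ^ a) =
      ∏ j ∈ range a, Nat.choose ((j + 1) * p ^ e) (p ^ e) := by
    rw [factorial_mul_eq (p ^ e) a,
      Nat.mul_div_cancel _ (pow_pos (Nat.factorial_pos _) a)]
  rw [hq]
  have : (∏ j ∈ range a, Nat.choose ((j + 1) * p ^ e) (p ^ e)) ≡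
      ∏ j ∈ range a, (j + 1) [MOD p] := by
    rw [← ZMod.natCast_eq_natCast_iff] at *
    push_cast
    exact Finset.prod_congr rfl fun j _ => by
      have := lucas_step p (j + 1) e
      rw [← ZMod.natCast_eq_natCast_iff] at this
      push_cast at this
      exact this
  simpa [Finset.prod_range_add_one_eq_factorial] using this
end

section
/- Let p be a prime and i ≠ j nonnegative integers. Then for every nonnegative integer m, C(m, p^i) · ( C(m + p^j, p^j) - C(m + p^j - p^i, p^j) ) ≡ 0 (mod p). -/
open Nat

lemma key (p : ℕ) (hp : p.Prime) (j n : ℕ) :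
    (Nat.choose n (p ^ j) : ℤ) ≡ ((n / p ^ j % p : ℕ) : ℤ) [ZMOD p] := by
  haveI : Fact p.Prime := ⟨hp⟩
  have h := Choose.choose_modEq_choose_mul_prod_range_choose (p := p) (n := n) (k := p ^ j) (j + 1)
  have h1 : p ^ j / p ^ (j + 1) = 0 :=
    Nat.div_eq_of_lt (Nat.pow_lt_pow_right hp.one_lt (Nat.lt_succ_self j))
  have h2 : ∀ x ∈ Finset.range j, Nat.choose (n / p ^ x % p) (p ^ j / p ^ x % p) = 1 := by
    intro x hx
    have hxj : x < j := Finset.mem_range.mp hx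
    have hd : p ^ j / p ^ x = p ^ (j - x) := Nat.pow_div hxj.le hp.pos
    have hz : p ^ (j - x) % p = 0 := by
      obtain ⟨c, hc⟩ := dvd_pow_self p (Nat.sub_ne_zero_of_lt hxj)
      simp [hc, Nat.mul_mod_right]
    rw [hd, hz, Nat.choose_zero_right]
  have h3 : p ^ j / p ^ j % p = 1 := by
    rw [Nat.div_self (pow_pos hp.pos j), Nat.mod_eq_of_lt hp.one_lt]
  rw [Finset.prod_range_succ, Finset.prod_eq_one h2, h1, h3, one_mul,
    Nat.choose_zero_right, Nat.choose_one_right] at h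
  simpa using h

theorem stmt_7 (p : ℕ) (hp : p.Prime) (i j : ℕ) (hij : i ≠ j) (m : ℕ) :
    (Nat.choose m (p ^ i) : ℤ) *
        ((Nat.choose (m + p ^ j) (p ^ j) : ℤ) - Nat.choose (m + p ^ j - p ^ i) (p ^ j))
      ≡ 0 [ZMOD p] := by
  have hpj : 0 < p ^ j := pow_pos hp.pos j
  have hpi : 0 < p ^ i := pow_pos hp.pos i
  rcases Nat.eq_zero_or_pos (m / p ^ i % p) with h0 | h0
  · have h := key p hp i m
    rw [h0] at h
    have : (Nat.choose m (p ^ i) : ℤ) ≡ 0 [ZMOD p] := by simpa using h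
    simpa using this.mul (Int.ModEq.refl _)
  · have hle : p ^ i ≤ m := by
      have h1 : 1 ≤ m / p ^ i := Nat.pos_of_ne_zero fun h => by simp [h] at h0
      exact (Nat.one_le_div_iff hpi).mp h1
    have hsub : m + p ^ j - p ^ i = m - p ^ i + p ^ j := by omega
    have hdig : (m + p ^ j) / p ^ j % p = (m + p ^ j - p ^ i) / p ^ j % p := by
      rw [hsub, Nat.add_div_right _ hpj, Nat.add_div_right _ hpj]
      rcases lt_or_gt_of_ne hij with hlt | hgt
      · -- i < j : subtracting p^i doesn't change the quotient by p^j
        have hm : p ^ i ≤ m % p ^ j := by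
          have e1 : m % p ^ j / p ^ i % p = m / p ^ i % p := by
            rw [show p ^ j = p ^ i * p ^ (j - i) by rw [← pow_add]; congr 1; omega,
              Nat.mod_mul_right_div_self,
              Nat.mod_mod_of_dvd _ (dvd_pow_self p (Nat.sub_ne_zero_of_lt hlt))]
          by_contra hc
          push_neg at hc
          rw [Nat.div_eq_of_lt hc] at e1
          simp at e1
          omega
        have hq : (m - p ^ i) / p ^ j = m / p ^ j := by
          have hdm := Nat.div_add_mod m (p ^ j)
          have hdm' : m / p ^ j * p ^ j + m % p ^ j = m := Nat.div_add_mod' m (p ^ j)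
          have hmod := Nat.mod_lt m (y := p ^ j) hpj
          exact Nat.div_eq_of_lt_le (by omega) (by rw [add_mul]; omega)
        rw [hq]
      · -- j < i
        have hq : (m - p ^ i) / p ^ j = m / p ^ j - p ^ (i - j) := by
          rw [show p ^ i = p ^ j * p ^ (i - j) by rw [← pow_add]; congr 1; omega] at hle ⊢
          exact Nat.sub_mul_div _ _ _
        obtain ⟨k, hk⟩ : p ∣ p ^ (i - j) := dvd_pow_self p (Nat.sub_ne_zero_of_lt hgt)
        have hle2 : p ^ (i - j) ≤ m / p ^ j := by
          have := Nat.div_le_div_right (c := p ^ j) hle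
          rwa [Nat.pow_div hgt.le hp.pos] at this
        rw [hq, hk, show m / p ^ j - p * k + 1 = m / p ^ j + 1 - p * k by omega,
          Nat.sub_mul_mod (by omega)]
    have h1 := key p hp j (m + p ^ j)
    have h2 := key p hp j (m + p ^ j - p ^ i)
    rw [hdig] at h1
    have : (Nat.choose (m + p ^ j) (p ^ j) : ℤ) - Nat.choose (m + p ^ j - p ^ i) (p ^ j)
        ≡ 0 [ZMOD p] := by simpa using h1.sub h2
    simpa using (Int.ModEq.refl (Nat.choose m (p ^ i) : ℤ)).mul this
end

section
/- Let p be a prime, write m = Σ_{i=0}^{e} a_i p^i with a_i in {0,...,p-1}, and let n be any nonnegative integer. Then C(m+n, m) ≡ Π_{i=0}^{e} (1/a_i!) Π_{j=0}^{a_i - 1} ( C(n + p^i, p^i) + j ) (mod p), where the inner product is 1 when a_i = 0. -/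
section aux

variable {p : ℕ} [Fact p.Prime]

private lemma hp0' : 0 < p := (Fact.out : p.Prime).pos

private lemma lucas_step_s10 (n k : ℕ) :
    ((n.choose k : ℕ) : ZMod p) =
      (((n % p).choose (k % p) : ℕ) : ZMod p) * (((n / p).choose (k / p) : ℕ) : ZMod p) := by
  have h := Choose.choose_modEq_choose_mod_mul_choose_div_nat (p := p) (n := n) (k := k)
  rw [← Nat.cast_mul]
  exact (ZMod.natCast_eq_natCast_iff _ _ _).mpr h

/-- Lemma A : C(n + p^i, p^i) ≡ n/p^i + 1 mod p -/
private lemma lemA (i : ℕ) : ∀ n : ℕ,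
    (((n + p ^ i).choose (p ^ i) : ℕ) : ZMod p) = ((n / p ^ i : ℕ) : ZMod p) + 1 := by
  induction i with
  | zero =>
    intro n
    simp [Nat.choose_one_right]
  | succ i ih =>
    intro n
    rw [lucas_step_s10]
    have h1 : p ^ (i + 1) % p = 0 := by
      rw [pow_succ, Nat.mul_mod_left]
    have h2 : p ^ (i + 1) / p = p ^ i := by
      rw [pow_succ, Nat.mul_div_cancel _ hp0']
    have h3 : (n + p ^ (i + 1)) % p = n % p := by
      conv_lhs => rw [pow_succ']
      rw [Nat.add_mul_mod_self_left]
    have h4 : (n + p ^ (i + 1)) / p = n / p + p ^ i := by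
      conv_lhs => rw [pow_succ']
      rw [Nat.add_mul_div_left _ _ hp0']
    rw [h1, h2, h3, h4, ih (n / p), Nat.div_div_eq_div_mul, ← pow_succ']
    simp

/-- key carry fact: if `b < p`, `x < p` and `p ≤ x + b` then `C(x+b, b) ≡ 0`. -/
private lemma carry_zero {x b : ℕ} (hx : x < p) (hb : b < p) (h : p ≤ x + b) :
    (((x + b).choose b : ℕ) : ZMod p) = 0 := by
  rw [lucas_step_s10]
  have hmod : (x + b) % p = x + b - p := by
    rw [Nat.mod_eq_sub_mod h, Nat.mod_eq_of_lt (by omega)]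
  rw [hmod, Nat.mod_eq_of_lt hb, Nat.choose_eq_zero_of_lt (by omega)]
  simp

/-- L1 : C(x + b, b) ≡ C(x % p + b, b) mod p, for b < p. -/
private lemma lemL1 {b : ℕ} (hb : b < p) (x : ℕ) :
    (((x + b).choose b : ℕ) : ZMod p) = (((x % p + b).choose b : ℕ) : ZMod p) := by
  rw [lucas_step_s10, lucas_step_s10 (x % p + b) b]
  have hb' : b % p = b := Nat.mod_eq_of_lt hb
  have hmm : (x + b) % p = (x % p + b) % p := by
    rw [Nat.add_mod, Nat.add_mod (x % p) b, Nat.mod_mod_of_dvd x (dvd_refl p)]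
  rw [hb', hmm, Nat.div_eq_of_lt hb]
  simp [Nat.choose_zero_right]

/-- Lemma C : Lucas product form. -/
private lemma lemC : ∀ (e : ℕ) (a : ℕ → ℕ), (∀ i, a i < p) → ∀ n : ℕ,
    ((((∑ i ∈ Finset.range (e + 1), a i * p ^ i) + n).choose
        (∑ i ∈ Finset.range (e + 1), a i * p ^ i) : ℕ) : ZMod p)
      = ∏ i ∈ Finset.range (e + 1),
          (((n / p ^ i % p + a i).choose (a i) : ℕ) : ZMod p) := by
  intro e
  induction e with
  | zero =>
    intro a ha n
    simp only [zero_add, Finset.sum_range_one, Finset.prod_range_one, pow_zero, mul_one,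
      Nat.div_one]
    rw [Nat.add_comm (a 0) n, lemL1 (ha 0) n]
  | succ e ih =>
    intro a ha n
    have hsum : (∑ i ∈ Finset.range (e + 2), a i * p ^ i)
        = p * (∑ i ∈ Finset.range (e + 1), a (i + 1) * p ^ i) + a 0 := by
      rw [Finset.sum_range_succ']
      simp only [pow_zero, mul_one, Finset.mul_sum]
      congr 1
      refine Finset.sum_congr rfl fun i _ => ?_
      ring
    rw [hsum]
    have key := ih (fun i => a (i + 1)) (fun i => ha (i + 1)) (n / p)
    set s : ℕ := ∑ i ∈ Finset.range (e + 1), a (i + 1) * p ^ i with hs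
    have hm : (p * s + a 0) % p = a 0 := by
      rw [Nat.mul_add_mod, Nat.mod_eq_of_lt (ha 0)]
    have hd : (p * s + a 0) / p = s := by
      rw [Nat.mul_add_div hp0', Nat.div_eq_of_lt (ha 0), Nat.add_zero]
    rw [lucas_step_s10]
    have hmn : (p * s + a 0 + n) % p = (a 0 + n % p) % p := by
      rw [Nat.add_assoc, Nat.mul_add_mod, Nat.add_mod, Nat.mod_eq_of_lt (ha 0)]
    have hmn' : (p * s + a 0 + n) / p = s + (a 0 + n) / p := by
      rw [Nat.add_assoc, Nat.mul_add_div hp0']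
    rw [hm, hd, hmn, hmn']
    by_cases hc : a 0 + n % p < p
    · have h1 : (a 0 + n % p) % p = a 0 + n % p := Nat.mod_eq_of_lt hc
      have h2 : (a 0 + n) / p = n / p := by
        rw [Nat.add_div hp0', Nat.div_eq_of_lt (ha 0), Nat.mod_eq_of_lt (ha 0),
          if_neg (by omega)]
        omega
      conv_rhs => rw [Finset.prod_range_succ']
      rw [h1, h2, key, mul_comm]
      congr 1
      · exact Finset.prod_congr rfl fun i _ => by rw [Nat.div_div_eq_div_mul, ← pow_succ']
      · rw [pow_zero, Nat.div_one, Nat.add_comm]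
    · push_neg at hc
      have hnp : n % p < p := Nat.mod_lt n hp0'
      have ha0 : a 0 < p := ha 0
      have h1 : (a 0 + n % p) % p = a 0 + n % p - p := by
        rw [Nat.mod_eq_sub_mod hc, Nat.mod_eq_of_lt (by omega)]
      have hz : (((n / p ^ 0 % p + a 0).choose (a 0) : ℕ) : ZMod p) = 0 := by
        rw [pow_zero, Nat.div_one]
        exact carry_zero hnp (ha 0) (by omega)
      rw [h1, Nat.choose_eq_zero_of_lt (by omega),
        Finset.prod_eq_zero (Finset.mem_range.mpr (Nat.succ_pos (e + 1))) hz]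
      simp

/-- product of consecutive integers equals factorial times binomial -/
private lemma prod_consec (d k : ℕ) :
    (∏ j ∈ Finset.range k, (d + 1 + j)) = k.factorial * (d + k).choose k := by
  rw [← Nat.ascFactorial_eq_factorial_mul_choose]
  induction k with
  | zero => simp
  | succ k ih => rw [Finset.prod_range_succ, ih, Nat.ascFactorial_succ]; ring

end aux

theorem stmt_10 (p : ℕ) (hp : p.Prime) (e : ℕ) (a : ℕ → ℕ)
    (ha : ∀ i, a i < p) (m : ℕ)
    (hm : m = ∑ i ∈ Finset.range (e + 1), a i * p ^ i) (n : ℕ) :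
    (Nat.choose (m + n) m : ZMod p)
      = ∏ i ∈ Finset.range (e + 1),
          ((a i).factorial : ZMod p)⁻¹ *
            ∏ j ∈ Finset.range (a i),
              ((Nat.choose (n + p ^ i) (p ^ i) : ZMod p) + (j : ZMod p)) := by
  haveI : Fact p.Prime := ⟨hp⟩
  subst hm
  rw [lemC e a ha n]
  refine Finset.prod_congr rfl fun i _ => ?_
  have hfac : (((a i).factorial : ℕ) : ZMod p) ≠ 0 := by
    rw [Ne, ZMod.natCast_eq_zero_iff]
    intro h
    have := (Nat.Prime.dvd_factorial hp).mp h
    have := ha i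
    omega
  have hprod : ∏ j ∈ Finset.range (a i),
      ((Nat.choose (n + p ^ i) (p ^ i) : ZMod p) + (j : ZMod p))
      = ((∏ j ∈ Finset.range (a i), (n / p ^ i % p + 1 + j) : ℕ) : ZMod p) := by
    push_cast
    refine Finset.prod_congr rfl fun j _ => ?_
    rw [lemA i n, ZMod.natCast_mod]
  rw [hprod, prod_consec]
  push_cast
  rw [← mul_assoc, inv_mul_cancel₀ hfac, one_mul]
end

section
/- Let p > 3 be a prime, e ≥ 1, and R = F_p[x,y], f = x^2 + y^3. Then both x and y belong to the ideal (f^{p^e - 1})^{[1/p^e]}, the minimal ideal J with f^{p^e - 1} ∈ J^{[p^e]}. In particular, the test ideal τ(f^λ) contains (x,y) for every λ < 1. -/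
open MvPolynomial

/-- The `p^e`-th Frobenius power of an ideal: the ideal generated by `p^e`-th powers
of elements of `J`. -/
def frobeniusPower {R : Type*} [CommRing R] (J : Ideal R) (q : ℕ) : Ideal R :=
  Ideal.span ((fun u => u ^ q) '' (J : Set R))

/-- The `q`-th Frobenius root `b^{[1/q]}` of an ideal `b`: the minimal ideal `J`
with `b ≤ J^{[q]}`. -/
noncomputable def frobeniusRoot {R : Type*} [CommRing R] (b : Ideal R) (q : ℕ) : Ideal R :=
  sInf {J : Ideal R | b ≤ frobeniusPower J q}

/-! ### Auxiliary Cartier-type operator -/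

noncomputable def piRoot (p q : ℕ) (hq : 0 < q) (a : Fin 2 →₀ ℕ)
    (g : MvPolynomial (Fin 2) (ZMod p)) : MvPolynomial (Fin 2) (ZMod p) :=
  AddMonoidAlgebra.ofCoeff (Finsupp.comapDomain (fun d => q • d + a) (AddMonoidAlgebra.coeff g) (by
    intro x _ y _ h
    simpa [add_left_inj, Finsupp.ext_iff, Finsupp.smul_apply,
      Nat.mul_left_cancel_iff hq] using h))

theorem piRoot_coeff (p q : ℕ) (hq : 0 < q) (a d : Fin 2 →₀ ℕ)
    (g : MvPolynomial (Fin 2) (ZMod p)) :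
    coeff d (piRoot p q hq a g) = coeff (q • d + a) g := rfl

theorem piRoot_add (p q : ℕ) (hq : 0 < q) (a : Fin 2 →₀ ℕ)
    (g h : MvPolynomial (Fin 2) (ZMod p)) :
    piRoot p q hq a (g + h) = piRoot p q hq a g + piRoot p q hq a h := by
  apply MvPolynomial.ext; intro d
  simp [piRoot_coeff, coeff_add]

theorem piRoot_zero (p q : ℕ) (hq : 0 < q) (a : Fin 2 →₀ ℕ) :
    piRoot p q hq a 0 = 0 := by
  apply MvPolynomial.ext; intro d
  simp [piRoot_coeff]

theorem piRoot_mul_C (p q : ℕ) (hq : 0 < q) (a : Fin 2 →₀ ℕ)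
    (g : MvPolynomial (Fin 2) (ZMod p)) (c : ZMod p) :
    piRoot p q hq a (g * C c) = piRoot p q hq a g * C c := by
  apply MvPolynomial.ext; intro d
  rw [mul_comm, mul_comm (piRoot p q hq a g)]; simp [piRoot_coeff, coeff_C_mul]

theorem piRoot_mul_X_pow (p q : ℕ) (hq : 0 < q) (a : Fin 2 →₀ ℕ) (ha : ∀ i, a i < q)
    (g : MvPolynomial (Fin 2) (ZMod p)) (i : Fin 2) :
    piRoot p q hq a (g * X i ^ q) = piRoot p q hq a g * X i := by
  apply MvPolynomial.ext; intro d
  rw [piRoot_coeff, X_pow_eq_monomial, coeff_mul_monomial',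
    ← pow_one (X i), X_pow_eq_monomial, coeff_mul_monomial']
  have hle : Finsupp.single i q ≤ q • d + a ↔ Finsupp.single i 1 ≤ d := by
    simp only [Finsupp.single_le_iff, Finsupp.add_apply, Finsupp.smul_apply, smul_eq_mul]
    have := ha i
    constructor
    · intro h
      rcases Nat.eq_zero_or_pos (d i) with h0 | h1
      · rw [h0, Nat.mul_zero] at h; omega
      · exact h1
    · intro h; nlinarith
  rw [if_congr hle rfl rfl]
  by_cases hd : Finsupp.single i 1 ≤ d
  · rw [if_pos hd, if_pos hd, piRoot_coeff]
    have harg : q • d + a - Finsupp.single i q = q • (d - Finsupp.single i 1) + a := by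
      ext j
      simp only [Finsupp.tsub_apply, Finsupp.add_apply, Finsupp.smul_apply, smul_eq_mul,
        Finsupp.single_apply]
      have := ha j
      by_cases hij : i = j
      · subst hij
        rw [if_pos rfl, if_pos rfl]
        have h1 : 1 ≤ d i := by simpa using (Finsupp.single_le_iff.mp hd)
        obtain ⟨m, hm⟩ : ∃ m, d i = m + 1 := ⟨d i - 1, by omega⟩
        rw [hm]
        simp only [Nat.add_sub_cancel, Nat.mul_succ]
        omega
      · simp [hij]
    rw [harg, mul_one]
  · rw [if_neg hd, if_neg hd]

theorem piRoot_mul_pow (p e : ℕ) [Fact p.Prime] (hq : 0 < p ^ e) (a : Fin 2 →₀ ℕ)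
    (ha : ∀ i, a i < p ^ e) (u g : MvPolynomial (Fin 2) (ZMod p)) :
    piRoot p (p ^ e) hq a (g * u ^ p ^ e) = piRoot p (p ^ e) hq a g * u := by
  induction u using MvPolynomial.induction_on generalizing g with
  | C c =>
    rw [← C_pow, ZMod.pow_card_pow, piRoot_mul_C]
  | add u v hu hv =>
    rw [add_pow_char_pow, mul_add, piRoot_add, hu, hv, mul_add]
  | mul_X u i hu =>
    rw [mul_pow, ← mul_assoc, piRoot_mul_X_pow p _ hq a ha, hu, mul_assoc]

theorem piRoot_mem (p e : ℕ) [Fact p.Prime] (hq : 0 < p ^ e) (a : Fin 2 →₀ ℕ)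
    (ha : ∀ i, a i < p ^ e) (J : Ideal (MvPolynomial (Fin 2) (ZMod p)))
    (h : MvPolynomial (Fin 2) (ZMod p)) (hh : h ∈ frobeniusPower J (p ^ e)) :
    piRoot p (p ^ e) hq a h ∈ J := by
  rw [frobeniusPower, Ideal.span] at hh
  rw [Submodule.mem_span_set] at hh
  obtain ⟨c, hsupp, hsum⟩ := hh
  rw [← hsum, Finsupp.sum]
  have : piRoot p (p ^ e) hq a (∑ v ∈ c.support, c v • v)
      = ∑ v ∈ c.support, piRoot p (p ^ e) hq a (c v • v) := by
    classical
    induction c.support using Finset.induction_on with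
    | empty => simp [piRoot_zero]
    | insert _ _ hnot ih =>
      rw [Finset.sum_insert hnot, Finset.sum_insert hnot, piRoot_add, ih]
  rw [this]
  apply Ideal.sum_mem
  intro v hv
  obtain ⟨u, hu, huv⟩ := hsupp hv
  rw [smul_eq_mul, ← huv, piRoot_mul_pow p e hq a ha]
  exact Ideal.mul_mem_left _ _ hu

/-! ### Coefficients of `(x² + y³)^n` -/

open Finset in
theorem coeff_f_pow (p n : ℕ) (m : Fin 2 →₀ ℕ) :
    coeff m ((X 0 ^ 2 + X 1 ^ 3 : MvPolynomial (Fin 2) (ZMod p)) ^ n) =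
      ∑ k ∈ range (n + 1), (if Finsupp.single 0 (2 * k) + Finsupp.single 1 (3 * (n - k)) = m
        then (n.choose k : ZMod p) else 0) := by
  rw [add_pow, coeff_sum]
  apply Finset.sum_congr rfl
  intro k hk
  rw [← pow_mul, ← pow_mul, X_pow_eq_monomial, X_pow_eq_monomial, monomial_mul, mul_one,
    show ((n.choose k : ℕ) : MvPolynomial (Fin 2) (ZMod p)) = C ((n.choose k : ZMod p)) by
      norm_cast,
    mul_comm _ (C ((n.choose k : ZMod p))), coeff_C_mul, coeff_monomial]
  simp [mul_ite]

open Finset in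
theorem extractA (p q t : ℕ) (hq : 0 < q) (hqt : q = 2 * t + 3) :
    piRoot p q hq (Finsupp.single 0 (2 * t + 1))
      ((X 0 ^ 2 + X 1 ^ 3 : MvPolynomial (Fin 2) (ZMod p)) ^ (2 * t + 2)) = X 0 := by
  subst hqt
  set q : ℕ := 2 * t + 3 with hqdef
  apply MvPolynomial.ext
  intro d
  rw [piRoot_coeff, coeff_f_pow, coeff_X']
  have key : ∀ k ∈ range (2 * t + 2 + 1),
      (Finsupp.single 0 (2 * k) + Finsupp.single (1 : Fin 2) (3 * (2 * t + 2 - k))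
        = q • d + Finsupp.single 0 (2 * t + 1))
        ↔ (k = 2 * t + 2 ∧ d = Finsupp.single 0 1) := by
    intro k hk
    rw [mem_range] at hk
    constructor
    · intro h
      have h0 := DFunLike.congr_fun h (0 : Fin 2)
      have h1 := DFunLike.congr_fun h (1 : Fin 2)
      simp only [Finsupp.add_apply, Finsupp.single_apply, Finsupp.smul_apply, smul_eq_mul] at h0 h1
      norm_num at h0 h1
      have hd0 : d 0 ≤ 1 := by nlinarith [h0, hk]
      have hd0' : d 0 = 1 := by
        interval_cases h : d 0 <;> omega
      rw [hd0'] at h0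
      have hkval : k = 2 * t + 2 := by omega
      subst hkval
      have hd1 : d 1 = 0 := by
        rw [show 2 * t + 2 - (2 * t + 2) = 0 by omega] at h1
        rcases Nat.eq_zero_or_pos (d 1) with h' | h'
        · exact h'
        · nlinarith
      refine ⟨rfl, ?_⟩
      ext j
      match j with
      | 0 => simpa using hd0'
      | 1 => simpa using hd1
    · rintro ⟨rfl, rfl⟩
      ext j
      match j with
      | 0 => simp [hqdef]; ring
      | 1 => simp
  rw [Finset.sum_congr rfl (fun k hk => if_congr (key k hk) rfl rfl)]
  by_cases hd : d = Finsupp.single 0 1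
  · subst hd
    rw [if_pos rfl]
    rw [Finset.sum_eq_single (2 * t + 2)]
    · simp
    · intro k hk hne; simp [hne]
    · intro h; simp at h
  · rw [if_neg (fun h => hd h.symm)]
    apply Finset.sum_eq_zero
    intro k hk
    simp [hd]

open Finset in
theorem extractB (p q t : ℕ) (hq : 0 < q) (hqt : q = 2 * t + 3) :
    piRoot p q hq (Finsupp.single 0 (2 * t + 2) + Finsupp.single 1 t)
      ((X 0 ^ 2 + X 1 ^ 3 : MvPolynomial (Fin 2) (ZMod p)) ^ (2 * t + 2)) =
      C (((2 * t + 2).choose (t + 1) : ZMod p)) * X 1 := by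
  subst hqt
  set q : ℕ := 2 * t + 3 with hqdef
  apply MvPolynomial.ext
  intro d
  rw [piRoot_coeff, coeff_f_pow, coeff_C_mul, coeff_X']
  have key : ∀ k ∈ range (2 * t + 2 + 1),
      (Finsupp.single 0 (2 * k) + Finsupp.single (1 : Fin 2) (3 * (2 * t + 2 - k))
        = q • d + (Finsupp.single 0 (2 * t + 2) + Finsupp.single 1 t))
        ↔ (k = t + 1 ∧ d = Finsupp.single 1 1) := by
    intro k hk
    rw [mem_range] at hk
    constructor
    · intro h
      have h0 := DFunLike.congr_fun h (0 : Fin 2)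
      have h1 := DFunLike.congr_fun h (1 : Fin 2)
      simp only [Finsupp.add_apply, Finsupp.single_apply, Finsupp.smul_apply, smul_eq_mul] at h0 h1
      norm_num at h0 h1
      have hd0 : d 0 ≤ 1 := by nlinarith [h0, hk]
      have hd0' : d 0 = 0 := by
        interval_cases h : d 0 <;> omega
      rw [hd0'] at h0
      have hkval : k = t + 1 := by omega
      subst hkval
      rw [show 2 * t + 2 - (t + 1) = t + 1 by omega] at h1
      have hd1 : d 1 ≤ 1 := by nlinarith
      have hd1' : d 1 = 1 := by
        interval_cases h : d 1 <;> omega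
      refine ⟨rfl, ?_⟩
      ext j
      match j with
      | 0 => simpa using hd0'
      | 1 => simpa using hd1'
    · rintro ⟨rfl, rfl⟩
      ext j
      match j with
      | 0 => simp; ring_nf
      | 1 => simp [hqdef]; omega
  rw [Finset.sum_congr rfl (fun k hk => if_congr (key k hk) rfl rfl)]
  by_cases hd : d = Finsupp.single 1 1
  · subst hd
    rw [if_pos rfl, mul_one]
    rw [Finset.sum_eq_single (t + 1)]
    · simp
    · intro k hk hne; simp [hne]
    · intro h; rw [mem_range] at h; omega
  · rw [if_neg (fun h => hd h.symm), mul_zero]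
    apply Finset.sum_eq_zero
    intro k hk
    simp [hd]

theorem choose_ne_zero' (p e : ℕ) [hp : Fact p.Prime] (k : ℕ) (hk : k ≤ p ^ e - 1) :
    ((p ^ e - 1).choose k : ZMod p) ≠ 0 := by
  have hq : 1 ≤ p ^ e := Nat.one_le_pow _ _ hp.out.pos
  induction k with
  | zero => simp
  | succ k ih =>
    have hk' : k ≤ p ^ e - 1 := by omega
    have hpascal := Nat.choose_succ_succ' (p ^ e - 1) k
    rw [show p ^ e - 1 + 1 = p ^ e by omega] at hpascal
    have hdvd : p ∣ (p ^ e).choose (k + 1) :=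
      Nat.Prime.dvd_choose_pow hp.out (by omega) (by omega)
    have hzero : (((p ^ e).choose (k + 1) : ℕ) : ZMod p) = 0 :=
      (ZMod.natCast_eq_zero_iff _ _).mpr hdvd
    rw [hpascal] at hzero
    push_cast at hzero
    have : ((p ^ e - 1).choose (k + 1) : ZMod p) = -((p ^ e - 1).choose k : ZMod p) := by
      linear_combination hzero
    rw [this, neg_ne_zero]
    exact ih hk'

/-! ### Main membership lemma -/

theorem xy_mem_of_fp (p e : ℕ) (hp : p.Prime) (hp3 : 3 < p) (he : 1 ≤ e)
    (J : Ideal (MvPolynomial (Fin 2) (ZMod p)))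
    (hJ : (X 0 ^ 2 + X 1 ^ 3 : MvPolynomial (Fin 2) (ZMod p)) ^ (p ^ e - 1)
      ∈ frobeniusPower J (p ^ e)) :
    X 0 ∈ J ∧ X 1 ∈ J := by
  haveI : Fact p.Prime := ⟨hp⟩
  have hp4 : p ≠ 4 := by rintro rfl; norm_num at hp
  have hp5 : 5 ≤ p := by omega
  have hq5 : 5 ≤ p ^ e := le_trans hp5 (Nat.le_self_pow (by omega) p)
  have hodd : p ^ e % 2 = 1 := by
    obtain ⟨m, hm⟩ : Odd (p ^ e) := (hp.odd_of_ne_two (by omega)).pow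
    omega
  obtain ⟨t, htq⟩ : ∃ t, p ^ e = 2 * t + 3 := ⟨(p ^ e - 3) / 2, by omega⟩
  have ht : 1 ≤ t := by omega
  have hq : 0 < p ^ e := by omega
  have hexp : p ^ e - 1 = 2 * t + 2 := by omega
  rw [hexp] at hJ
  constructor
  · have hmem := piRoot_mem p e hq (Finsupp.single 0 (2 * t + 1))
      (fun i => by
        match i with
        | 0 => simp only [Finsupp.single_eq_same]; omega
        | 1 => rw [Finsupp.single_eq_of_ne (by decide)]; omega)
      J _ hJ
    rwa [extractA p (p ^ e) t hq htq] at hmem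
  · have hmem := piRoot_mem p e hq (Finsupp.single 0 (2 * t + 2) + Finsupp.single 1 t)
      (fun i => by
        match i with
        | 0 =>
          rw [Finsupp.add_apply, Finsupp.single_eq_same, Finsupp.single_eq_of_ne (by decide)]
          omega
        | 1 =>
          rw [Finsupp.add_apply, Finsupp.single_eq_same, Finsupp.single_eq_of_ne (by decide)]
          omega)
      J _ hJ
    rw [extractB p (p ^ e) t hq htq] at hmem
    have hc : (((2 * t + 2).choose (t + 1) : ℕ) : ZMod p) ≠ 0 := by
      have := choose_ne_zero' p e (t + 1) (by omega)
      rwa [hexp] at this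
    have hX1 : (X 1 : MvPolynomial (Fin 2) (ZMod p)) =
        C ((((2 * t + 2).choose (t + 1) : ℕ) : ZMod p))⁻¹ *
          (C ((((2 * t + 2).choose (t + 1) : ℕ) : ZMod p)) * X 1) := by
      rw [← mul_assoc, ← C_mul, inv_mul_cancel₀ hc, C_1, one_mul]
    rw [hX1]
    exact Ideal.mul_mem_left _ _ hmem

theorem mem_root (p e : ℕ) (hp : p.Prime) (hp3 : 3 < p) (he : 1 ≤ e) :
    X 0 ∈ frobeniusRoot
        (Ideal.span {(X 0 ^ 2 + X 1 ^ 3 : MvPolynomial (Fin 2) (ZMod p)) ^ (p ^ e - 1)})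
        (p ^ e) ∧
    X 1 ∈ frobeniusRoot
        (Ideal.span {(X 0 ^ 2 + X 1 ^ 3 : MvPolynomial (Fin 2) (ZMod p)) ^ (p ^ e - 1)})
        (p ^ e) := by
  constructor <;>
  · rw [frobeniusRoot]
    refine Submodule.mem_sInf.mpr fun J hJ => ?_
    have hmem := hJ (Ideal.mem_span_singleton_self _)
    first
      | exact (xy_mem_of_fp p e hp hp3 he J hmem).1
      | exact (xy_mem_of_fp p e hp hp3 he J hmem).2

theorem root_mono {R : Type*} [CommRing R] {b b' : Ideal R} (h : b ≤ b') (q : ℕ) :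
    frobeniusRoot b q ≤ frobeniusRoot b' q :=
  sInf_le_sInf fun _ hJ => le_trans h hJ

theorem stmt_13 (p : ℕ) (hp : p.Prime) (hp3 : 3 < p) (e : ℕ) (he : 1 ≤ e)
    (f : MvPolynomial (Fin 2) (ZMod p)) (hf : f = X 0 ^ 2 + X 1 ^ 3) :
    (X 0 ∈ frobeniusRoot (Ideal.span {f ^ (p ^ e - 1)}) (p ^ e) ∧
      X 1 ∈ frobeniusRoot (Ideal.span {f ^ (p ^ e - 1)}) (p ^ e)) ∧
    ∀ lam : ℝ, 0 ≤ lam → lam < 1 → ∃ e₀ : ℕ, ∀ e' ≥ e₀,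
      X 0 ∈ frobeniusRoot (Ideal.span {f ^ ⌈lam * (p : ℝ) ^ e'⌉₊}) (p ^ e') ∧
      X 1 ∈ frobeniusRoot (Ideal.span {f ^ ⌈lam * (p : ℝ) ^ e'⌉₊}) (p ^ e') := by
  subst hf
  refine ⟨mem_root p e hp hp3 he, ?_⟩
  intro lam h0 h1
  have hp1 : (1 : ℝ) < p := by exact_mod_cast (by omega : 1 < p)
  obtain ⟨N, hN⟩ := pow_unbounded_of_one_lt (1 / (1 - lam)) hp1
  refine ⟨max 1 N, fun e' he' => ?_⟩
  have he1 : 1 ≤ e' := le_trans (le_max_left _ _) he'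
  have hceil : ⌈lam * (p : ℝ) ^ e'⌉₊ ≤ p ^ e' - 1 := by
    rw [Nat.ceil_le]
    have h1l : (0 : ℝ) < 1 - lam := by linarith
    have hP : (1 / (1 - lam)) < (p : ℝ) ^ e' :=
      lt_of_lt_of_le hN (pow_le_pow_right₀ (le_of_lt hp1) (le_trans (le_max_right _ _) he'))
    have hkey : 1 < (p : ℝ) ^ e' * (1 - lam) := (div_lt_iff₀ h1l).mp hP
    have h1q : 1 ≤ p ^ e' := Nat.one_le_pow _ _ (by omega)
    have hcast : ((p ^ e' - 1 : ℕ) : ℝ) = (p : ℝ) ^ e' - 1 := by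
      rw [Nat.cast_sub h1q]
      push_cast
      ring
    rw [hcast]
    nlinarith
  have hmem := mem_root p e' hp hp3 he1
  have hle : Ideal.span {(X 0 ^ 2 + X 1 ^ 3 : MvPolynomial (Fin 2) (ZMod p)) ^ (p ^ e' - 1)} ≤
      Ideal.span {(X 0 ^ 2 + X 1 ^ 3 : MvPolynomial (Fin 2) (ZMod p)) ^ ⌈lam * (p : ℝ) ^ e'⌉₊} := by
    rw [Ideal.span_singleton_le_span_singleton]
    exact pow_dvd_pow _ hceil
  exact ⟨root_mono hle _ hmem.1, root_mono hle _ hmem.2⟩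
end
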